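/- arXiv:2410.19181 — 6 statements merged into one kernel-verified Lean document; each statement's English description precedes it below -/
import Mathlib

section
/- For θ ∈ (0,1), b ≥ 0 and β ≥ 0, the function ψ(t) = (b + β t^(1/θ))^θ is convex on [0,∞). -/
open Real

/-- For `θ ∈ (0,1)`, `b ≥ 0`, `β ≥ 0`, the function `ψ(t) = (b + β t^(1/θ))^θ`
is convex on `[0,∞)`. -/
theorem stmt1 (θ b β : ℝ) (hθ0 : 0 < θ) (hθ1 : θ < 1) (hb : 0 ≤ b) (hβ : 0 ≤ β) :
    ConvexOn ℝ (Set.Ici (0 : ℝ)) (fun t => (b + β * t ^ (1 / θ)) ^ θ) := by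
  set p : ENNReal := ENNReal.ofReal (1 / θ) with hp
  have hθinv : (1:ℝ) ≤ 1 / θ := one_le_one_div hθ0 hθ1.le
  haveI : Fact (1 ≤ p) := ⟨by rw [hp]; exact_mod_cast ENNReal.one_le_ofReal.2 hθinv⟩
  have hptoReal : p.toReal = 1 / θ := ENNReal.toReal_ofReal (by positivity)
  have key : ∀ t : ℝ, 0 ≤ t →
      ‖(WithLp.equiv p (Fin 2 → ℝ)).symm ![b ^ θ, β ^ θ * t]‖
        = (b + β * t ^ (1 / θ)) ^ θ := by
    intro t ht
    rw [PiLp.norm_eq_sum (by rw [hptoReal]; positivity)]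
    rw [hptoReal, Fin.sum_univ_two]
    simp only [WithLp.equiv_symm_apply, PiLp.toLp_apply, Matrix.cons_val_zero, Matrix.cons_val_one,
      Matrix.head_cons]
    rw [Real.norm_eq_abs, Real.norm_eq_abs, abs_of_nonneg (by positivity),
      abs_of_nonneg (by positivity), Real.mul_rpow (by positivity) ht,
      ← Real.rpow_mul hb, ← Real.rpow_mul hβ, mul_one_div_cancel hθ0.ne',
      Real.rpow_one, Real.rpow_one, one_div_one_div]
  refine ⟨convex_Ici 0, ?_⟩
  intro x hx y hy a c ha hc hac
  simp only [smul_eq_mul]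
  have hxy : (0:ℝ) ≤ a * x + c * y := by
    have := Set.mem_Ici.1 hx; have := Set.mem_Ici.1 hy; positivity
  rw [← key x hx, ← key y hy, ← key _ hxy]
  have hv : ((WithLp.equiv p (Fin 2 → ℝ)).symm ![b ^ θ, β ^ θ * (a * x + c * y)])
      = a • (WithLp.equiv p (Fin 2 → ℝ)).symm ![b ^ θ, β ^ θ * x]
        + c • (WithLp.equiv p (Fin 2 → ℝ)).symm ![b ^ θ, β ^ θ * y] := by
    have h2 : ![b ^ θ, β ^ θ * (a * x + c * y)]
        = a • ![b ^ θ, β ^ θ * x] + c • ![b ^ θ, β ^ θ * y] := by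
      ext i
      fin_cases i <;> simp [smul_eq_mul]
      · rw [← add_mul, hac, one_mul]
      · ring
    rw [h2, WithLp.equiv_symm_apply, ← WithLp.toLp_smul, ← WithLp.toLp_smul, ← WithLp.toLp_add]
  rw [hv]
  calc ‖a • (WithLp.equiv p (Fin 2 → ℝ)).symm ![b ^ θ, β ^ θ * x]
        + c • (WithLp.equiv p (Fin 2 → ℝ)).symm ![b ^ θ, β ^ θ * y]‖
      ≤ ‖a • (WithLp.equiv p (Fin 2 → ℝ)).symm ![b ^ θ, β ^ θ * x]‖
        + ‖c • (WithLp.equiv p (Fin 2 → ℝ)).symm ![b ^ θ, β ^ θ * y]‖ := norm_add_le _ _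
    _ = a * ‖(WithLp.equiv p (Fin 2 → ℝ)).symm ![b ^ θ, β ^ θ * x]‖
        + c * ‖(WithLp.equiv p (Fin 2 → ℝ)).symm ![b ^ θ, β ^ θ * y]‖ := by
        rw [norm_smul, norm_smul, Real.norm_of_nonneg ha, Real.norm_of_nonneg hc]
end

section
/- For θ ∈ (0,1), b ≥ 0, β ≥ 0 and s, t ≥ 0, one has |(b + β s^(1/θ))^θ − (b + β t^(1/θ))^θ| ≤ β^θ |s − t|. -/
open Real

private lemma key (θ b β s t : ℝ) (hθ0 : 0 < θ) (hθ1 : θ < 1) (hb : 0 ≤ b) (hβ : 0 ≤ β)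
    (ht : 0 ≤ t) (hts : t ≤ s) :
    (b + β * s ^ (1 / θ)) ^ θ - (b + β * t ^ (1 / θ)) ^ θ ≤ β ^ θ * (s - t) := by
  have hp : (1:ℝ) ≤ 1 / θ := by
    rw [le_div_iff₀ hθ0]; linarith
  set f : Fin 2 → ℝ := ![b ^ θ, β ^ θ * t] with hf
  set g : Fin 2 → ℝ := ![0, β ^ θ * (s - t)] with hg
  have hfn : ∀ i ∈ Finset.univ, 0 ≤ f i := by
    intro i _
    fin_cases i <;> simp [hf]
    · positivity
    · exact mul_nonneg (rpow_nonneg hβ θ) ht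
  have hgn : ∀ i ∈ Finset.univ, 0 ≤ g i := by
    intro i _
    fin_cases i <;> simp [hg]
    exact mul_nonneg (rpow_nonneg hβ θ) (by linarith)
  have H := Real.Lp_add_le_of_nonneg (Finset.univ) hp hfn hgn
  have hθne : θ ≠ 0 := ne_of_gt hθ0
  have e1 : (b ^ θ) ^ (1/θ) = b := by
    rw [← Real.rpow_mul hb, mul_one_div, div_self hθne, rpow_one]
  have e2 : (β ^ θ) ^ (1/θ) = β := by
    rw [← Real.rpow_mul hβ, mul_one_div, div_self hθne, rpow_one]
  have e3 : (1:ℝ) / (1/θ) = θ := by field_simp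
  simp only [Fin.sum_univ_two, hf, hg, Matrix.cons_val_zero, Matrix.cons_val_one,
    Matrix.head_cons] at H
  have hs0 : (0:ℝ) ≤ s := le_trans ht hts
  have hst0 : (0:ℝ) ≤ s - t := by linarith
  rw [show β ^ θ * t + β ^ θ * (s - t) = β ^ θ * s by ring, add_zero] at H
  rw [mul_rpow (rpow_nonneg hβ θ) hs0, mul_rpow (rpow_nonneg hβ θ) ht, e1, e2, e3,
    zero_rpow (by positivity : (1:ℝ)/θ ≠ 0), zero_add,
    mul_rpow (rpow_nonneg hβ θ) hst0, e2, mul_rpow hβ (rpow_nonneg hst0 _),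
    ← Real.rpow_mul hst0, one_div_mul_cancel hθne, rpow_one] at H
  linarith

/-- For `θ ∈ (0,1)`, `b ≥ 0`, `β ≥ 0`, `s, t ≥ 0`:
`|(b + β s^(1/θ))^θ − (b + β t^(1/θ))^θ| ≤ β^θ |s − t|`. -/
theorem stmt3 (θ b β s t : ℝ) (hθ0 : 0 < θ) (hθ1 : θ < 1) (hb : 0 ≤ b) (hβ : 0 ≤ β)
    (hs : 0 ≤ s) (ht : 0 ≤ t) :
    |(b + β * s ^ (1 / θ)) ^ θ - (b + β * t ^ (1 / θ)) ^ θ| ≤ β ^ θ * |s - t| := by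
  rcases le_total t s with h | h
  · rw [abs_of_nonneg (by linarith : (0:ℝ) ≤ s - t)]
    have h1 := key θ b β s t hθ0 hθ1 hb hβ ht h
    have h2 : (b + β * t ^ (1 / θ)) ^ θ ≤ (b + β * s ^ (1 / θ)) ^ θ := by
      gcongr
    rw [abs_of_nonneg (by linarith)]; exact h1
  · rw [abs_of_nonpos (by linarith : s - t ≤ 0)]
    have h1 := key θ b β t s hθ0 hθ1 hb hβ hs h
    have h2 : (b + β * s ^ (1 / θ)) ^ θ ≤ (b + β * t ^ (1 / θ)) ^ θ := by
      gcongr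
    rw [abs_of_nonpos (by linarith)]
    have : -(s - t) = t - s := by ring
    rw [this]; linarith
end

section
/- Let β ∈ (0,1), c ≥ 1 with cβ^θ < 1, θ ∈ (0,1), and M > 0. Define F₁ on the set of nonnegative functions V with ‖V‖_ω ≤ R by F₁V(s) = sup_{a ∈ A(s)} [r(s,a) + β(∫ V dq(·|s,a))^(1/θ)]^θ where 0 ≤ r(s,a) ≤ M ω(s) and ∫ ω dq(·|s,a) ≤ c ω(s). Then ‖F₁ V‖_ω ≤ (M + β c^(1/θ) ‖V‖_ω^(1/θ))^θ; in particular F₁ maps the set of functions with finite ω-norm into itself. -/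
open MeasureTheory Real

/-- Norm bound for the Bellman operator `F₁` (Case 1, `θ ∈ (0,1)`):
if `0 ≤ r(s,a) ≤ M ω(s)`, `∫ ω dq(·|s,a) ≤ c ω(s)` and `0 ≤ V ≤ K ω`, then
`F₁V(s) ≤ (M + β c^(1/θ) K^(1/θ))^θ ω(s)` for all `s`; in particular `F₁` maps
the set of functions of finite `ω`-norm into itself. -/
theorem stmt12 {S A : Type*} [MeasurableSpace S]
    (𝒜 : S → Set A) (hne : ∀ s, (𝒜 s).Nonempty)
    (q : S → A → Measure S) (hq : ∀ s a, IsProbabilityMeasure (q s a))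
    (ω : S → ℝ) (hω1 : ∀ s, 1 ≤ ω s)
    (r : S → A → ℝ) (M c β θ K : ℝ)
    (hθ0 : 0 < θ) (hθ1 : θ < 1) (hβ0 : 0 < β) (hβ1 : β < 1)
    (hM : 0 < M) (hc : 1 ≤ c) (hcβ : c * β ^ θ < 1) (hK : 0 ≤ K)
    (hr0 : ∀ s a, a ∈ 𝒜 s → 0 ≤ r s a)
    (hrM : ∀ s a, a ∈ 𝒜 s → r s a ≤ M * ω s)
    (hωint : ∀ s a, a ∈ 𝒜 s → Integrable ω (q s a))
    (hωbd : ∀ s a, a ∈ 𝒜 s → ∫ s', ω s' ∂(q s a) ≤ c * ω s)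
    (V : S → ℝ) (hVmeas : Measurable V) (hV0 : ∀ s, 0 ≤ V s)
    (hVK : ∀ s, V s ≤ K * ω s) :
    ∀ s, sSup ((fun a => (r s a + β * (∫ s', V s' ∂(q s a)) ^ (1 / θ)) ^ θ) '' 𝒜 s)
      ≤ (M + β * c ^ (1 / θ) * K ^ (1 / θ)) ^ θ * ω s := by
  intro s
  have hω0 : (0:ℝ) ≤ ω s := le_trans zero_le_one (hω1 s)
  have hωpos : (0:ℝ) < ω s := lt_of_lt_of_le zero_lt_one (hω1 s)
  have hc0 : (0:ℝ) ≤ c := le_trans zero_le_one hc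
  have hinv : (1:ℝ) ≤ 1 / θ := by
    rw [le_div_iff₀ hθ0]; linarith
  apply csSup_le ((hne s).image _)
  rintro x ⟨a, ha, rfl⟩
  -- integrability of V
  have hVint : Integrable V (q s a) := by
    refine Integrable.mono' ((hωint s a ha).const_mul K) hVmeas.aestronglyMeasurable ?_
    filter_upwards with s'
    rw [Real.norm_eq_abs, abs_of_nonneg (hV0 s')]
    exact hVK s'
  set I := ∫ s', V s' ∂(q s a) with hI
  have hI0 : 0 ≤ I := integral_nonneg hV0
  have hIle : I ≤ c * K * ω s := by
    have h1 : I ≤ ∫ s', K * ω s' ∂(q s a) :=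
      integral_mono hVint ((hωint s a ha).const_mul K) (fun s' => hVK s')
    have h2 : ∫ s', K * ω s' ∂(q s a) = K * ∫ s', ω s' ∂(q s a) := integral_const_mul K _
    calc I ≤ K * ∫ s', ω s' ∂(q s a) := by rw [← h2]; exact h1
      _ ≤ K * (c * ω s) := mul_le_mul_of_nonneg_left (hωbd s a ha) hK
      _ = c * K * ω s := by ring
  -- bound the inner expression
  have key : r s a + β * I ^ (1 / θ) ≤ (M + β * c ^ (1 / θ) * K ^ (1 / θ)) * (ω s) ^ (1 / θ) := by
    have hω_le : ω s ≤ (ω s) ^ (1 / θ) := by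
      calc ω s = (ω s) ^ (1:ℝ) := (Real.rpow_one _).symm
        _ ≤ (ω s) ^ (1 / θ) := Real.rpow_le_rpow_of_exponent_le (hω1 s) hinv
    have hIr : I ^ (1 / θ) ≤ c ^ (1 / θ) * K ^ (1 / θ) * (ω s) ^ (1 / θ) := by
      calc I ^ (1 / θ) ≤ (c * K * ω s) ^ (1 / θ) :=
            Real.rpow_le_rpow hI0 hIle (by positivity)
        _ = c ^ (1 / θ) * K ^ (1 / θ) * (ω s) ^ (1 / θ) := by
            rw [Real.mul_rpow (by positivity) hω0, Real.mul_rpow hc0 hK]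
    have hr' : r s a ≤ M * (ω s) ^ (1 / θ) :=
      le_trans (hrM s a ha) (mul_le_mul_of_nonneg_left hω_le hM.le)
    have hβI : β * I ^ (1 / θ) ≤ β * (c ^ (1 / θ) * K ^ (1 / θ) * (ω s) ^ (1 / θ)) :=
      mul_le_mul_of_nonneg_left hIr hβ0.le
    nlinarith [hr', hβI]
  have hbase0 : 0 ≤ r s a + β * I ^ (1 / θ) := by
    have := hr0 s a ha
    positivity
  calc (r s a + β * I ^ (1 / θ)) ^ θ
      ≤ ((M + β * c ^ (1 / θ) * K ^ (1 / θ)) * (ω s) ^ (1 / θ)) ^ θ :=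
        Real.rpow_le_rpow hbase0 key hθ0.le
    _ = (M + β * c ^ (1 / θ) * K ^ (1 / θ)) ^ θ * ω s := by
        rw [Real.mul_rpow (by positivity) (by positivity)]
        rw [← Real.rpow_mul hω0, one_div_mul_cancel hθ0.ne', Real.rpow_one]
end

section
/- Under the assumptions of Case 1 (θ ∈ (0,1), r(s,a) ≤ M ω(s), ∫ ω dq(·|s,a) ≤ c ω(s), c β^θ < 1), the Bellman operator F₁V(s) = sup_{a ∈ A(s)} [r(s,a) + β(∫_S V(s') q(ds'|s,a))^(1/θ)]^θ satisfies ‖F₁V₁ − F₁V₂‖_ω ≤ c β^θ ‖V₁ − V₂‖_ω for all nonnegative V₁, V₂ of finite ω-norm, i.e., F₁ is a cβ^θ-contraction in the ω-weighted supremum norm. -/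
open MeasureTheory Real

/-- Decreasing increments of `x ↦ x^θ` for `θ ∈ (0,1]`. -/
private lemma rpow_incr_lemma {θ : ℝ} (hθ0 : 0 < θ) (hθ1 : θ ≤ 1)
    {b y₁ y₂ : ℝ} (hb : 0 ≤ b) (hy₁ : 0 ≤ y₁) (h12 : y₁ ≤ y₂) :
    (b + y₂) ^ θ - (b + y₁) ^ θ ≤ y₂ ^ θ - y₁ ^ θ := by
  rcases eq_or_lt_of_le h12 with rfl | hlt
  · simp
  set d := y₂ - y₁ with hd
  have hd0 : 0 < d := sub_pos.2 hlt
  set g : ℝ → ℝ := fun u => (u + d) ^ θ - u ^ θ with hg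
  have key : AntitoneOn g (Set.Icc y₁ (y₁ + b)) := by
    have hder : ∀ u ∈ interior (Set.Icc y₁ (y₁ + b)),
        HasDerivAt g (1 * θ * (u + d) ^ (θ - 1) - 1 * θ * u ^ (θ - 1)) u := by
      intro u hu
      rw [interior_Icc] at hu
      have hu0 : 0 < u := lt_of_le_of_lt hy₁ hu.1
      have hud : 0 < u + d := by linarith
      exact (((hasDerivAt_id u).add_const d).rpow_const (Or.inl hud.ne')).sub
        ((hasDerivAt_id u).rpow_const (Or.inl hu0.ne'))
    apply antitoneOn_of_deriv_nonpos (convex_Icc _ _)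
    · intro u hu
      have hu0 : (0:ℝ) ≤ u := le_trans hy₁ hu.1
      have hud : 0 < u + d := by linarith
      exact (((continuousAt_id.add continuousAt_const).rpow_const
        (Or.inl hud.ne')).sub
        (continuousAt_id.rpow_const (Or.inr hθ0.le))).continuousWithinAt
    · intro u hu
      exact ((hder u hu).differentiableAt).differentiableWithinAt
    · intro u hu
      rw [(hder u hu).deriv]
      rw [interior_Icc] at hu
      have hu0 : 0 < u := lt_of_le_of_lt hy₁ hu.1
      have hle : (u + d) ^ (θ - 1) ≤ u ^ (θ - 1) :=
        Real.rpow_le_rpow_of_nonpos hu0 (by linarith) (by linarith)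
      nlinarith [hθ0]
  have h := key (Set.left_mem_Icc.2 (le_add_of_nonneg_right hb))
    (Set.right_mem_Icc.2 (le_add_of_nonneg_right hb)) (le_add_of_nonneg_right hb)
  simp only [hg] at h
  rw [show y₁ + b + d = b + y₂ by rw [hd]; ring,
    show y₁ + b = b + y₁ from add_comm _ _,
    show y₁ + d = y₂ by rw [hd]; ring] at h
  exact h

private lemma rpow_beta_eq {θ β I : ℝ} (hθ0 : 0 < θ) (hβ : 0 ≤ β) (hI : 0 ≤ I) :
    (β * I ^ (1 / θ)) ^ θ = β ^ θ * I := by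
  rw [Real.mul_rpow hβ (Real.rpow_nonneg hI _), ← Real.rpow_mul hI,
    one_div, inv_mul_cancel₀ hθ0.ne', Real.rpow_one]

private lemma key_one_sided {θ β : ℝ} (hθ0 : 0 < θ) (hθ1 : θ ≤ 1) (hβ : 0 ≤ β)
    {b I₁ I₂ : ℝ} (hb : 0 ≤ b) (h2 : 0 ≤ I₂) (h21 : I₂ ≤ I₁) :
    (b + β * I₁ ^ (1 / θ)) ^ θ - (b + β * I₂ ^ (1 / θ)) ^ θ ≤ β ^ θ * (I₁ - I₂) := by
  have h1 : 0 ≤ I₁ := le_trans h2 h21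
  have hy : β * I₂ ^ (1 / θ) ≤ β * I₁ ^ (1 / θ) :=
    mul_le_mul_of_nonneg_left (Real.rpow_le_rpow h2 h21 (by positivity)) hβ
  have hy2 : 0 ≤ β * I₂ ^ (1 / θ) := mul_nonneg hβ (Real.rpow_nonneg h2 _)
  have := rpow_incr_lemma hθ0 hθ1 hb hy2 hy
  rw [rpow_beta_eq hθ0 hβ h1, rpow_beta_eq hθ0 hβ h2] at this
  linarith

private lemma key_abs {θ β : ℝ} (hθ0 : 0 < θ) (hθ1 : θ ≤ 1) (hβ : 0 ≤ β)
    {b I₁ I₂ : ℝ} (hb : 0 ≤ b) (h1 : 0 ≤ I₁) (h2 : 0 ≤ I₂) :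
    |(b + β * I₁ ^ (1 / θ)) ^ θ - (b + β * I₂ ^ (1 / θ)) ^ θ| ≤ β ^ θ * |I₁ - I₂| := by
  have mono : ∀ J₁ J₂ : ℝ, 0 ≤ J₂ → J₂ ≤ J₁ →
      (b + β * J₂ ^ (1 / θ)) ^ θ ≤ (b + β * J₁ ^ (1 / θ)) ^ θ := by
    intro J₁ J₂ hJ2 hJ
    apply Real.rpow_le_rpow
    · have : 0 ≤ β * J₂ ^ (1 / θ) := mul_nonneg hβ (Real.rpow_nonneg hJ2 _)
      linarith
    · have := mul_le_mul_of_nonneg_left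
        (Real.rpow_le_rpow (z := 1 / θ) hJ2 hJ (by positivity)) hβ
      linarith
    · exact hθ0.le
  rcases le_total I₂ I₁ with hle | hle
  · rw [abs_of_nonneg (sub_nonneg.2 (mono I₁ I₂ h2 hle)),
      abs_of_nonneg (sub_nonneg.2 hle)]
    exact key_one_sided hθ0 hθ1 hβ hb h2 hle
  · rw [abs_of_nonpos (sub_nonpos.2 (mono I₂ I₁ h1 hle)),
      abs_of_nonpos (sub_nonpos.2 hle)]
    have := key_one_sided hθ0 hθ1 hβ hb h1 hle
    linarith

private lemma sSup_abs_sub_le {α : Type*} {A : Set α} (hA : A.Nonempty)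
    (f g : α → ℝ) {D : ℝ} (hD : 0 ≤ D) (h : ∀ a ∈ A, |f a - g a| ≤ D) :
    |sSup (f '' A) - sSup (g '' A)| ≤ D := by
  have hfg : ∀ a ∈ A, f a ≤ g a + D := fun a ha => by
    have := (abs_le.1 (h a ha)).2; linarith
  have hgf : ∀ a ∈ A, g a ≤ f a + D := fun a ha => by
    have := (abs_le.1 (h a ha)).1; linarith
  by_cases hb : BddAbove (f '' A)
  · have hb' : BddAbove (g '' A) := by
      obtain ⟨u, hu⟩ := hb
      refine ⟨u + D, ?_⟩
      rintro x ⟨a, ha, rfl⟩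
      exact le_trans (hgf a ha) (add_le_add_left (hu (Set.mem_image_of_mem f ha)) D)
    rw [abs_sub_le_iff]
    constructor
    · rw [sub_le_iff_le_add]
      refine csSup_le (hA.image f) ?_
      rintro x ⟨a, ha, rfl⟩
      have := le_csSup hb' (Set.mem_image_of_mem g ha)
      have := hfg a ha
      linarith
    · rw [sub_le_iff_le_add]
      refine csSup_le (hA.image g) ?_
      rintro x ⟨a, ha, rfl⟩
      have := le_csSup hb (Set.mem_image_of_mem f ha)
      have := hgf a ha
      linarith
  · have hb' : ¬ BddAbove (g '' A) := by
      intro hbg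
      apply hb
      obtain ⟨u, hu⟩ := hbg
      refine ⟨u + D, ?_⟩
      rintro x ⟨a, ha, rfl⟩
      exact le_trans (hfg a ha) (add_le_add_left (hu (Set.mem_image_of_mem g ha)) D)
    rw [Real.sSup_of_not_bddAbove hb, Real.sSup_of_not_bddAbove hb']
    simpa using hD

/-- Case 1 (`θ ∈ (0,1)`): the Bellman operator
`F₁V(s) = sup_{a ∈ A(s)} [r(s,a) + β (∫ V dq(·|s,a))^(1/θ)]^θ`
is a `cβ^θ`-contraction in the `ω`-weighted sup norm: if `|V₁ − V₂| ≤ K ω`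
pointwise then `|F₁V₁ − F₁V₂| ≤ c β^θ K ω` pointwise. -/
theorem stmt13 {S A : Type*} [MeasurableSpace S]
    (𝒜 : S → Set A) (hne : ∀ s, (𝒜 s).Nonempty)
    (q : S → A → Measure S) (hq : ∀ s a, IsProbabilityMeasure (q s a))
    (ω : S → ℝ) (hω1 : ∀ s, 1 ≤ ω s)
    (r : S → A → ℝ) (M c β θ K : ℝ)
    (hθ0 : 0 < θ) (hθ1 : θ < 1) (hβ0 : 0 < β) (hβ1 : β < 1)
    (hM : 0 < M) (hc : 1 ≤ c) (hcβ : c * β ^ θ < 1) (hK : 0 ≤ K)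
    (hr0 : ∀ s a, a ∈ 𝒜 s → 0 ≤ r s a)
    (hrM : ∀ s a, a ∈ 𝒜 s → r s a ≤ M * ω s)
    (hωint : ∀ s a, a ∈ 𝒜 s → Integrable ω (q s a))
    (hωbd : ∀ s a, a ∈ 𝒜 s → ∫ s', ω s' ∂(q s a) ≤ c * ω s)
    (V₁ V₂ : S → ℝ) (hm₁ : Measurable V₁) (hm₂ : Measurable V₂)
    (h₁0 : ∀ s, 0 ≤ V₁ s) (h₂0 : ∀ s, 0 ≤ V₂ s)
    (hi₁ : ∀ s a, a ∈ 𝒜 s → Integrable V₁ (q s a))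
    (hi₂ : ∀ s a, a ∈ 𝒜 s → Integrable V₂ (q s a))
    (hlip : ∀ s, |V₁ s - V₂ s| ≤ K * ω s) :
    ∀ s, |sSup ((fun a => (r s a + β * (∫ s', V₁ s' ∂(q s a)) ^ (1 / θ)) ^ θ) '' 𝒜 s)
        - sSup ((fun a => (r s a + β * (∫ s', V₂ s' ∂(q s a)) ^ (1 / θ)) ^ θ) '' 𝒜 s)|
      ≤ c * β ^ θ * K * ω s := by
  intro s
  have hωs : (0:ℝ) < ω s := lt_of_lt_of_le one_pos (hω1 s)
  have hc0 : (0:ℝ) < c := lt_of_lt_of_le one_pos hc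
  have hD0 : 0 ≤ c * β ^ θ * K * ω s :=
    mul_nonneg (mul_nonneg (mul_nonneg hc0.le (Real.rpow_nonneg hβ0.le θ)) hK) hωs.le
  refine sSup_abs_sub_le (hne s) _ _ hD0 ?_
  intro a ha
  have hI1 : 0 ≤ ∫ s', V₁ s' ∂(q s a) := integral_nonneg h₁0
  have hI2 : 0 ≤ ∫ s', V₂ s' ∂(q s a) := integral_nonneg h₂0
  refine le_trans (key_abs hθ0 hθ1.le hβ0.le (hr0 s a ha) hI1 hI2) ?_
  have habs : |(∫ s', V₁ s' ∂(q s a)) - ∫ s', V₂ s' ∂(q s a)| ≤ K * (c * ω s) := by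
    rw [← integral_sub (hi₁ s a ha) (hi₂ s a ha)]
    calc |∫ s', (V₁ s' - V₂ s') ∂(q s a)| ≤ ∫ s', |V₁ s' - V₂ s'| ∂(q s a) := by
          simpa [Real.norm_eq_abs] using
            norm_integral_le_integral_norm (μ := q s a) (fun s' => V₁ s' - V₂ s')
      _ ≤ ∫ s', K * ω s' ∂(q s a) :=
          integral_mono ((hi₁ s a ha).sub (hi₂ s a ha)).abs
            ((hωint s a ha).const_mul K) (fun s' => hlip s')
      _ = K * ∫ s', ω s' ∂(q s a) := by rw [integral_const_mul]
      _ ≤ K * (c * ω s) := mul_le_mul_of_nonneg_left (hωbd s a ha) hK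
  calc β ^ θ * |(∫ s', V₁ s' ∂(q s a)) - ∫ s', V₂ s' ∂(q s a)|
      ≤ β ^ θ * (K * (c * ω s)) :=
        mul_le_mul_of_nonneg_left habs (Real.rpow_nonneg hβ0.le θ)
    _ = c * β ^ θ * K * ω s := by ring
end

section
/- Under the assumptions of Case 2 (θ > 1, r(s,a) ≤ M ω(s), ∫ ω^θ dq(·|s,a) ≤ c ω(s)^θ, c^(1/θ) β < 1), the operator F₂V(s) = sup_{a ∈ A(s)} [r(s,a) + β(∫_S V(s')^θ q(ds'|s,a))^(1/θ)] satisfies ‖F₂V₁ − F₂V₂‖_ω ≤ c^(1/θ) β ‖V₁ − V₂‖_ω, i.e., F₂ is a c^(1/θ)β-contraction in the ω-weighted supremum norm. -/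
open MeasureTheory Real

open scoped ENNReal NNReal

lemma sup_abs_le {α : Type*} {A : Set α} (hA : A.Nonempty) (f g : α → ℝ) (D : ℝ)
    (hD : 0 ≤ D) (h : ∀ a ∈ A, |f a - g a| ≤ D) :
    |sSup (f '' A) - sSup (g '' A)| ≤ D := by
  have hfg : ∀ a ∈ A, f a ≤ g a + D := by
    intro a ha; have := abs_le.1 (h a ha); linarith [this.2]
  have hgf : ∀ a ∈ A, g a ≤ f a + D := by
    intro a ha; have := abs_le.1 (h a ha); linarith [this.1]
  by_cases hb : BddAbove (f '' A)
  · have hbg : BddAbove (g '' A) := by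
      obtain ⟨b, hbb⟩ := hb
      refine ⟨b + D, ?_⟩
      rintro _ ⟨a, ha, rfl⟩
      have h1 := hbb ⟨a, ha, rfl⟩
      have h2 := hgf a ha
      linarith
    have h1 : sSup (f '' A) ≤ sSup (g '' A) + D := by
      apply csSup_le (hA.image f)
      rintro _ ⟨a, ha, rfl⟩
      have hg : g a ≤ sSup (g '' A) := le_csSup hbg ⟨a, ha, rfl⟩
      have := hfg a ha; linarith
    have h2 : sSup (g '' A) ≤ sSup (f '' A) + D := by
      apply csSup_le (hA.image g)
      rintro _ ⟨a, ha, rfl⟩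
      have hf : f a ≤ sSup (f '' A) := le_csSup hb ⟨a, ha, rfl⟩
      have := hgf a ha; linarith
    rw [abs_le]; constructor <;> linarith
  · have hbg : ¬ BddAbove (g '' A) := by
      intro hbg
      apply hb
      obtain ⟨b, hbb⟩ := hbg
      refine ⟨b + D, ?_⟩
      rintro _ ⟨a, ha, rfl⟩
      have h1 := hbb ⟨a, ha, rfl⟩
      have h2 := hfg a ha
      linarith
    rw [Real.sSup_of_not_bddAbove hb, Real.sSup_of_not_bddAbove hbg]
    simpa using hD

lemma eLpNorm_eq_ofReal {S : Type*} [MeasurableSpace S] (μ : Measure S)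
    (θ : ℝ) (hθ : 0 < θ) (f : S → ℝ)
    (h0 : ∀ x, 0 ≤ f x) (hint : Integrable (fun x => f x ^ θ) μ) :
    eLpNorm f (ENNReal.ofReal θ) μ = ENNReal.ofReal ((∫ x, f x ^ θ ∂μ) ^ (1/θ)) := by
  have hp0 : (ENNReal.ofReal θ) ≠ 0 := by
    simp only [ne_eq, ENNReal.ofReal_eq_zero, not_le]; linarith
  rw [eLpNorm_eq_lintegral_rpow_enorm_toReal hp0 ENNReal.ofReal_ne_top,
    ENNReal.toReal_ofReal hθ.le]; simp_rw [enorm_eq_nnnorm]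
  have hlint : ∫⁻ x, (‖f x‖₊ : ℝ≥0∞) ^ θ ∂μ = ENNReal.ofReal (∫ x, f x ^ θ ∂μ) := by
    rw [ofReal_integral_eq_lintegral_ofReal hint
      (Filter.Eventually.of_forall fun x => Real.rpow_nonneg (h0 x) θ)]
    apply lintegral_congr fun x => ?_
    rw [← ENNReal.ofReal_rpow_of_nonneg (h0 x) hθ.le]
    congr 1
    rw [← enorm_eq_nnnorm, ← ofReal_norm, Real.norm_of_nonneg (h0 x)]
  rw [hlint, ENNReal.ofReal_rpow_of_nonneg (integral_nonneg
    (fun x => Real.rpow_nonneg (h0 x) θ)) (by positivity : (0:ℝ) ≤ 1/θ)]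

lemma J_le {S : Type*} [MeasurableSpace S] (μ : Measure S) (θ c' K w : ℝ)
    (hθ : 1 ≤ θ) (hK : 0 ≤ K) (hw : 0 ≤ w) (hc' : 0 ≤ c')
    (V₁ V₂ ω : S → ℝ) (hm₁ : Measurable V₁) (hm₂ : Measurable V₂)
    (h₁0 : ∀ x, 0 ≤ V₁ x) (h₂0 : ∀ x, 0 ≤ V₂ x) (hω0 : ∀ x, 0 ≤ ω x)
    (hi₁ : Integrable (fun x => V₁ x ^ θ) μ) (hi₂ : Integrable (fun x => V₂ x ^ θ) μ)
    (hωint : Integrable (fun x => ω x ^ θ) μ)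
    (hωbd : ∫ x, ω x ^ θ ∂μ ≤ c' * w ^ θ)
    (hlip : ∀ x, |V₁ x - V₂ x| ≤ K * ω x) :
    (∫ x, V₁ x ^ θ ∂μ) ^ (1/θ) ≤ (∫ x, V₂ x ^ θ ∂μ) ^ (1/θ) + K * (c' ^ (1/θ) * w) := by
  have hθ0 : (0:ℝ) < θ := lt_of_lt_of_le zero_lt_one hθ
  set p := ENNReal.ofReal θ with hp
  have hp1 : (1:ℝ≥0∞) ≤ p := by
    rw [hp, ← ENNReal.ofReal_one]
    exact ENNReal.ofReal_le_ofReal hθ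
  -- triangle inequality
  have e : (fun x => V₂ x + (V₁ x - V₂ x)) = V₁ := by funext x; ring
  have htri : eLpNorm V₁ p μ ≤ eLpNorm V₂ p μ + eLpNorm (fun x => V₁ x - V₂ x) p μ := by
    calc eLpNorm V₁ p μ = eLpNorm (fun x => V₂ x + (V₁ x - V₂ x)) p μ := by rw [e]
    _ ≤ _ := eLpNorm_add_le hm₂.aestronglyMeasurable
        ((hm₁.sub hm₂)).aestronglyMeasurable hp1
  -- bound on difference
  have hKω : Integrable (fun x => (K * ω x) ^ θ) μ := by
    have : (fun x => (K * ω x) ^ θ) = fun x => K ^ θ * ω x ^ θ := by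
      funext x; rw [Real.mul_rpow hK (hω0 x)]
    rw [this]
    exact hωint.const_mul _
  have hdle : eLpNorm (fun x => V₁ x - V₂ x) p μ ≤ eLpNorm (fun x => K * ω x) p μ := by
    apply eLpNorm_mono fun x => ?_
    rw [Real.norm_eq_abs, Real.norm_of_nonneg (mul_nonneg hK (hω0 x))]
    exact hlip x
  have hKωeq : eLpNorm (fun x => K * ω x) p μ
      = ENNReal.ofReal ((∫ x, (K * ω x) ^ θ ∂μ) ^ (1/θ)) :=
    eLpNorm_eq_ofReal μ θ hθ0 _ (fun x => mul_nonneg hK (hω0 x)) hKω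
  -- real bound on the Kω term
  have hreal : (∫ x, (K * ω x) ^ θ ∂μ) ^ (1/θ) ≤ K * (c' ^ (1/θ) * w) := by
    have h1 : ∫ x, (K * ω x) ^ θ ∂μ = K ^ θ * ∫ x, ω x ^ θ ∂μ := by
      rw [← integral_const_mul]
      congr 1; funext x; rw [Real.mul_rpow hK (hω0 x)]
    have h2 : ∫ x, (K * ω x) ^ θ ∂μ ≤ K ^ θ * (c' * w ^ θ) := by
      rw [h1]
      exact mul_le_mul_of_nonneg_left hωbd (Real.rpow_nonneg hK θ)
    calc (∫ x, (K * ω x) ^ θ ∂μ) ^ (1/θ)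
        ≤ (K ^ θ * (c' * w ^ θ)) ^ (1/θ) := by
          apply Real.rpow_le_rpow (integral_nonneg fun x =>
            Real.rpow_nonneg (mul_nonneg hK (hω0 x)) θ) h2 (by positivity)
      _ = K * (c' ^ (1/θ) * w) := by
          rw [Real.mul_rpow (Real.rpow_nonneg hK θ) (by positivity),
            Real.mul_rpow hc' (Real.rpow_nonneg hw θ),
            ← Real.rpow_mul hK, ← Real.rpow_mul hw,
            mul_one_div_cancel (ne_of_gt hθ0), Real.rpow_one, Real.rpow_one]
  -- put together in ℝ≥0∞ and come back
  have hE₁ := eLpNorm_eq_ofReal μ θ hθ0 V₁ h₁0 hi₁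
  have hE₂ := eLpNorm_eq_ofReal μ θ hθ0 V₂ h₂0 hi₂
  have hfinal : ENNReal.ofReal ((∫ x, V₁ x ^ θ ∂μ) ^ (1/θ))
      ≤ ENNReal.ofReal ((∫ x, V₂ x ^ θ ∂μ) ^ (1/θ) + K * (c' ^ (1/θ) * w)) := by
    rw [ENNReal.ofReal_add (Real.rpow_nonneg (integral_nonneg fun x =>
      Real.rpow_nonneg (h₂0 x) θ) _) (by positivity)]
    calc ENNReal.ofReal ((∫ x, V₁ x ^ θ ∂μ) ^ (1/θ)) = eLpNorm V₁ p μ := hE₁.symm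
      _ ≤ eLpNorm V₂ p μ + eLpNorm (fun x => V₁ x - V₂ x) p μ := htri
      _ ≤ eLpNorm V₂ p μ + ENNReal.ofReal ((∫ x, (K * ω x) ^ θ ∂μ) ^ (1/θ)) := by
          gcongr
          rw [← hKωeq]; exact hdle
      _ ≤ _ := by
          rw [hE₂]
          exact add_le_add_right (ENNReal.ofReal_le_ofReal hreal) _
  exact (ENNReal.ofReal_le_ofReal_iff (add_nonneg (Real.rpow_nonneg
    (integral_nonneg fun x => Real.rpow_nonneg (h₂0 x) θ) _)
    (by positivity))).mp hfinal

/-- Case 2 (`θ > 1`): the operator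
`F₂V(s) = sup_{a ∈ A(s)} [r(s,a) + β (∫ V^θ dq(·|s,a))^(1/θ)]`
is a `c^(1/θ)β`-contraction in the `ω`-weighted sup norm: if `|V₁ − V₂| ≤ K ω`
pointwise then `|F₂V₁ − F₂V₂| ≤ c^(1/θ) β K ω` pointwise. -/
theorem stmt14 {S A : Type*} [MeasurableSpace S]
    (𝒜 : S → Set A) (hne : ∀ s, (𝒜 s).Nonempty)
    (q : S → A → Measure S) (hq : ∀ s a, IsProbabilityMeasure (q s a))
    (ω : S → ℝ) (hω1 : ∀ s, 1 ≤ ω s)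
    (r : S → A → ℝ) (M c β θ K : ℝ)
    (hθ : 1 < θ) (hβ0 : 0 < β) (hβ1 : β < 1)
    (hM : 0 < M) (hc : 1 ≤ c) (hcβ : c ^ (1 / θ) * β < 1) (hK : 0 ≤ K)
    (hr0 : ∀ s a, a ∈ 𝒜 s → 0 ≤ r s a)
    (hrM : ∀ s a, a ∈ 𝒜 s → r s a ≤ M * ω s)
    (hωint : ∀ s a, a ∈ 𝒜 s → Integrable (fun s' => ω s' ^ θ) (q s a))
    (hωbd : ∀ s a, a ∈ 𝒜 s → ∫ s', ω s' ^ θ ∂(q s a) ≤ c * ω s ^ θ)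
    (V₁ V₂ : S → ℝ) (hm₁ : Measurable V₁) (hm₂ : Measurable V₂)
    (h₁0 : ∀ s, 0 ≤ V₁ s) (h₂0 : ∀ s, 0 ≤ V₂ s)
    (hi₁ : ∀ s a, a ∈ 𝒜 s → Integrable (fun s' => V₁ s' ^ θ) (q s a))
    (hi₂ : ∀ s a, a ∈ 𝒜 s → Integrable (fun s' => V₂ s' ^ θ) (q s a))
    (hlip : ∀ s, |V₁ s - V₂ s| ≤ K * ω s) :
    ∀ s, |sSup ((fun a => r s a + β * (∫ s', V₁ s' ^ θ ∂(q s a)) ^ (1 / θ)) '' 𝒜 s)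
        - sSup ((fun a => r s a + β * (∫ s', V₂ s' ^ θ ∂(q s a)) ^ (1 / θ)) '' 𝒜 s)|
      ≤ c ^ (1 / θ) * β * K * ω s := by
  intro s
  have hω0 : ∀ x, (0:ℝ) ≤ ω x := fun x => le_trans zero_le_one (hω1 x)
  have hc0 : (0:ℝ) ≤ c := by linarith
  have hcρ : (0:ℝ) ≤ c ^ (1/θ) := Real.rpow_nonneg hc0 _
  have hD : (0:ℝ) ≤ c ^ (1/θ) * β * K * ω s :=
    mul_nonneg (mul_nonneg (mul_nonneg hcρ hβ0.le) hK) (hω0 s)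
  apply sup_abs_le (hne s) _ _ _ hD
  intro a ha
  have key₁ := J_le (q s a) θ c K (ω s) hθ.le hK (hω0 s) hc0 V₁ V₂ ω hm₁ hm₂
    h₁0 h₂0 hω0 (hi₁ s a ha) (hi₂ s a ha) (hωint s a ha) (hωbd s a ha) hlip
  have key₂ := J_le (q s a) θ c K (ω s) hθ.le hK (hω0 s) hc0 V₂ V₁ ω hm₂ hm₁
    h₂0 h₁0 hω0 (hi₂ s a ha) (hi₁ s a ha) (hωint s a ha) (hωbd s a ha)
    (fun x => by rw [abs_sub_comm]; exact hlip x)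
  have habs : |(∫ s', V₁ s' ^ θ ∂(q s a)) ^ (1/θ) - (∫ s', V₂ s' ^ θ ∂(q s a)) ^ (1/θ)|
      ≤ K * (c ^ (1/θ) * ω s) := by
    rw [abs_le]; constructor <;> linarith
  have : (r s a + β * (∫ s', V₁ s' ^ θ ∂(q s a)) ^ (1/θ))
      - (r s a + β * (∫ s', V₂ s' ^ θ ∂(q s a)) ^ (1/θ))
      = β * ((∫ s', V₁ s' ^ θ ∂(q s a)) ^ (1/θ) - (∫ s', V₂ s' ^ θ ∂(q s a)) ^ (1/θ)) := by
    ring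
  rw [this, abs_mul, abs_of_pos hβ0]
  calc β * |(∫ s', V₁ s' ^ θ ∂(q s a)) ^ (1/θ) - (∫ s', V₂ s' ^ θ ∂(q s a)) ^ (1/θ)|
      ≤ β * (K * (c ^ (1/θ) * ω s)) := mul_le_mul_of_nonneg_left habs hβ0.le
    _ = c ^ (1/θ) * β * K * ω s := by ring
end

section
/- Let T be a monotone operator on nonnegative functions such that the sequence T^m 0̂ (iterates starting from a function 0̂ with T 0̂ ≤ 0̂, i.e., in the decreasing case) is nonincreasing and converges pointwise to w₀. If T is given by Tψ(s) = max_{a ∈ A(s)} H(s,a,ψ) with A(s) compact and H(s,a,·) continuous along monotone decreasing sequences and H(s,·,ψ) upper semicontinuous, then w₀ satisfies w₀(s) = max_{a ∈ A(s)} H(s,a,w₀) for all s. -/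
open Filter Topology

private lemma cluster_frequently {A : Type*} [TopologicalSpace A] {K : Set A}
    {u : ℕ → A} (hu : ∀ n, u n ∈ K) {a : A} (hcl : MapClusterPt a atTop u)
    {f : A → ℝ} (hf : UpperSemicontinuousWithinAt f K a) {c : ℝ} (hc : f a < c) :
    ∃ᶠ n in atTop, f (u n) < c := by
  have h1 : {x | f x < c} ∈ 𝓝[K] a := hf c hc
  rw [mem_nhdsWithin] at h1
  obtain ⟨U, hUopen, haU, hsub⟩ := h1
  have h2 : ∃ᶠ n in atTop, u n ∈ U :=
    mapClusterPt_iff_frequently.mp hcl U (hUopen.mem_nhds haU)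
  exact h2.mono fun n hn => hsub ⟨hn, hu n⟩

private lemma usc_cluster_ge {A : Type*} [TopologicalSpace A] {K : Set A}
    {u : ℕ → A} (hu : ∀ n, u n ∈ K) {a : A} (ha : a ∈ K) (hcl : MapClusterPt a atTop u)
    {f : A → ℝ} (hf : UpperSemicontinuousOn f K) {c : ℝ}
    (hc : ∀ᶠ n in atTop, c ≤ f (u n)) : c ≤ f a := by
  by_contra h
  push_neg at h
  have h2 := cluster_frequently hu hcl (hf a ha) h
  obtain ⟨n, hn1, hn2⟩ := (h2.and_eventually hc).exists
  exact absurd (hn2.trans_lt hn1) (lt_irrefl c)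

private lemma usc_bddAbove {A : Type*} [TopologicalSpace A] {K : Set A}
    (hK : IsCompact K) {f : A → ℝ} (hf : UpperSemicontinuousOn f K) :
    BddAbove (f '' K) := by
  by_contra h
  have hxn : ∀ n : ℕ, ∃ x ∈ K, (n : ℝ) < f x := by
    intro n
    obtain ⟨y, hy, hny⟩ := not_bddAbove_iff.mp h n
    obtain ⟨x, hx, rfl⟩ := hy
    exact ⟨x, hx, hny⟩
  choose u hu hfu using hxn
  have hmap : map u atTop ≤ Filter.principal K :=
    tendsto_principal.mpr (Eventually.of_forall hu)
  obtain ⟨a, ha, hcl⟩ := hK.exists_clusterPt hmap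
  have h2 := cluster_frequently hu hcl (hf a ha) (lt_add_one (f a))
  obtain ⟨n, hn1, hn2⟩ := (h2.and_eventually (eventually_ge_atTop ⌈f a + 1⌉₊)).exists
  have : (n : ℝ) < f a + 1 := (hfu n).trans hn1
  have : f a + 1 ≤ (n : ℝ) := le_trans (Nat.le_ceil _) (by exact_mod_cast hn2)
  linarith

private lemma usc_exists_max {A : Type*} [TopologicalSpace A] {K : Set A}
    (hK : IsCompact K) (hne : K.Nonempty) {f : A → ℝ} (hf : UpperSemicontinuousOn f K) :
    ∃ a ∈ K, f a = sSup (f '' K) := by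
  have hbdd := usc_bddAbove hK hf
  have hxn : ∀ n : ℕ, ∃ x ∈ K, sSup (f '' K) - 1 / (n + 1) < f x := by
    intro n
    have hlt : sSup (f '' K) - 1 / (n + 1) < sSup (f '' K) := by
      have : (0 : ℝ) < 1 / (n + 1) := by positivity
      linarith
    obtain ⟨y, hy, hny⟩ := exists_lt_of_lt_csSup (hne.image f) hlt
    obtain ⟨x, hx, rfl⟩ := hy
    exact ⟨x, hx, hny⟩
  choose u hu hfu using hxn
  have hmap : map u atTop ≤ Filter.principal K :=
    tendsto_principal.mpr (Eventually.of_forall hu)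
  obtain ⟨a, ha, hcl⟩ := hK.exists_clusterPt hmap
  refine ⟨a, ha, le_antisymm (le_csSup hbdd ⟨a, ha, rfl⟩) ?_⟩
  have hge : ∀ ε > (0 : ℝ), sSup (f '' K) - ε ≤ f a := by
    intro ε hε
    refine usc_cluster_ge hu ha hcl hf ?_
    have : Tendsto (fun n : ℕ => (1 : ℝ) / (n + 1)) atTop (𝓝 0) :=
      tendsto_one_div_add_atTop_nhds_zero_nat
    filter_upwards [this.eventually_lt_const hε] with n hn
    have := (hfu n).le
    linarith
  by_contra hcon
  push_neg at hcon
  have := hge ((sSup (f '' K) - f a) / 2) (by linarith)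
  linarith

/-- Interchange of max and limit along nonincreasing iterates (Case (B)):
if `ψ_{m+1}(s) = max_{a ∈ A(s)} H(s,a,ψ_m)`, the `ψ_m` decrease pointwise to
`w₀`, `H(s,a,ψ_m) → H(s,a,w₀)` nonincreasingly, and `a ↦ H(s,a,ψ)` is upper
semicontinuous on the compact nonempty sets `A(s)` for the functions involved,
then `w₀(s) = max_{a ∈ A(s)} H(s,a,w₀)` for every `s`. -/
theorem stmt18 {S A : Type*} [TopologicalSpace A]
    (𝒜 : S → Set A) (hne : ∀ s, (𝒜 s).Nonempty) (hcomp : ∀ s, IsCompact (𝒜 s))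
    (H : S → A → (S → ℝ) → ℝ)
    (ψ : ℕ → S → ℝ) (w₀ : S → ℝ)
    (hiter : ∀ m s, ψ (m + 1) s = sSup ((fun a => H s a (ψ m)) '' 𝒜 s))
    (hdec : ∀ m s, ψ (m + 1) s ≤ ψ m s)
    (hlim : ∀ s, Tendsto (fun m => ψ m s) atTop (𝓝 (w₀ s)))
    (hHdec : ∀ s a, a ∈ 𝒜 s → Antitone (fun m => H s a (ψ m)))
    (hHlim : ∀ s a, a ∈ 𝒜 s → Tendsto (fun m => H s a (ψ m)) atTop (𝓝 (H s a w₀)))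
    (husc : ∀ s m, UpperSemicontinuousOn (fun a => H s a (ψ m)) (𝒜 s))
    (husc₀ : ∀ s, UpperSemicontinuousOn (fun a => H s a w₀) (𝒜 s)) :
    ∀ s, w₀ s = sSup ((fun a => H s a w₀) '' 𝒜 s) := by
  intro s
  have hbdd : ∀ m, BddAbove ((fun a => H s a (ψ m)) '' 𝒜 s) :=
    fun m => usc_bddAbove (hcomp s) (husc s m)
  have hbdd₀ : BddAbove ((fun a => H s a w₀) '' 𝒜 s) :=
    usc_bddAbove (hcomp s) (husc₀ s)
  -- w₀ s is ≥ ψ m s's limit bound: ψ is antitone, so w₀ s ≤ ψ m s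
  have hψanti : ∀ m n, m ≤ n → ψ n s ≤ ψ m s :=
    fun m n h => antitone_nat_of_succ_le (f := fun m => ψ m s) (fun k => hdec k s) h
  have hw₀le : ∀ m, w₀ s ≤ ψ m s := fun m =>
    le_of_tendsto (hlim s) (eventually_atTop.mpr ⟨m, fun n hn => hψanti m n hn⟩)
  -- Upper bound: every H s a w₀ ≤ w₀ s
  have hub : ∀ a ∈ 𝒜 s, H s a w₀ ≤ w₀ s := by
    intro a ha
    have h1 : ∀ m, H s a w₀ ≤ H s a (ψ m) := fun m =>
      le_of_tendsto (hHlim s a ha) (eventually_atTop.mpr ⟨m, fun n hn => hHdec s a ha hn⟩)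
    have h2 : ∀ m, H s a (ψ m) ≤ ψ (m + 1) s := by
      intro m
      rw [hiter m s]
      exact le_csSup (hbdd m) ⟨a, ha, rfl⟩
    have h3 : Tendsto (fun m => ψ (m + 1) s) atTop (𝓝 (w₀ s)) :=
      (hlim s).comp (tendsto_add_atTop_nat 1)
    exact ge_of_tendsto h3 (Eventually.of_forall fun m => (h1 m).trans (h2 m))
  -- maximizers
  have hmax : ∀ m, ∃ a ∈ 𝒜 s, H s a (ψ m) = ψ (m + 1) s := by
    intro m
    obtain ⟨a, ha, hfa⟩ := usc_exists_max (hcomp s) (hne s) (husc s m)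
    exact ⟨a, ha, by rw [hfa, hiter m s]⟩
  choose u hu hfu using hmax
  have hmap : map u atTop ≤ Filter.principal (𝒜 s) :=
    tendsto_principal.mpr (Eventually.of_forall hu)
  obtain ⟨a, ha, hcl⟩ := (hcomp s).exists_clusterPt hmap
  -- for each n, w₀ s ≤ H s a (ψ n)
  have hkey : ∀ n, w₀ s ≤ H s a (ψ n) := by
    intro n
    refine usc_cluster_ge hu ha hcl (husc s n) ?_
    filter_upwards [eventually_ge_atTop n] with m hm
    calc w₀ s ≤ ψ (m + 1) s := hw₀le (m + 1)
      _ = H s (u m) (ψ m) := (hfu m).symm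
      _ ≤ H s (u m) (ψ n) := hHdec s (u m) (hu m) hm
  have hlow : w₀ s ≤ H s a w₀ :=
    ge_of_tendsto (hHlim s a ha) (Eventually.of_forall hkey)
  refine le_antisymm (hlow.trans (le_csSup hbdd₀ ⟨a, ha, rfl⟩)) ?_
  exact csSup_le ((hne s).image _) (fun y ⟨b, hb, hby⟩ => hby ▸ hub b hb)
end
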